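/- Let (ℂ*)^{n+1} act on 𝔸^n by (σ₀,…,σₙ)·(t₁,…,tₙ) = (σ₁⁻¹t₁,…,σₙ⁻¹tₙ), and for 1 ≤ l ≤ n let K_l ⊂ 𝔸^n be the hyperplane {t_l = 0}. Then K_l is invariant under the action, and the map K_l ≅ 𝔸^{l−1} × 𝔸^{n−l} together with the homomorphism (ℂ*)^{n+1} → (ℂ*)^l × (ℂ*)^{n−l+1} sending (σ₀,…,σₙ) to ((σ₀,…,σ_{l−1}), (σ₀σ₁⋯σ_l, σ_{l+1},…,σₙ)) is an equivariant isomorphism, where 𝔸^{l−1} carries the action of (ℂ*)^l through its last l−1 coordinates and 𝔸^{n−l} carries the action of (ℂ*)^{n−l+1} through its last n−l coordinates. -/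
import Mathlib


/-- The hyperplane `K_l = {t_l = 0} ⊂ 𝔸ⁿ` is invariant under the
`(ℂ*)^{n+1}`-action `(σ·t)ᵢ = σᵢ⁻¹tᵢ` (through the last `n` coordinates), and
the identification `K_l ≅ 𝔸^{l−1} × 𝔸^{n−l}` together with the homomorphism
`(ℂ*)^{n+1} → (ℂ*)^l × (ℂ*)^{n−l+1}`,
`σ ↦ ((σ₀,…,σ_{l−1}), (σ₀σ₁⋯σ_l, σ_{l+1},…,σₙ))`, is an equivariant
isomorphism, where each factor of affine space carries the action of its torus
through the last coordinates. -/
theorem stmt13 (n l : ℕ) (hl1 : 1 ≤ l) (hln : l ≤ n)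
    (idx : Fin n) (hidx : idx.val = l - 1)
    (act : (Fin (n + 1) → ℂˣ) → (Fin n → ℂ) → (Fin n → ℂ))
    (hact : ∀ σ t i, act σ t i = (((σ i.succ)⁻¹ : ℂˣ) : ℂ) * t i)
    (φ : (Fin (n + 1) → ℂˣ) → (Fin l → ℂˣ) × (Fin (n - l + 1) → ℂˣ))
    (hφ1 : ∀ σ (i : Fin l), (φ σ).1 i = σ ⟨i.val, by have := i.isLt; omega⟩)
    (hφ2 : ∀ σ, (φ σ).2 0 = ∏ j : Fin (l + 1), σ ⟨j.val, by have := j.isLt; omega⟩)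
    (hφ3 : ∀ σ (i : Fin (n - l)), (φ σ).2 i.succ = σ ⟨l + 1 + i.val, by have := i.isLt; omega⟩)
    (Φ : {t : Fin n → ℂ // t idx = 0} → (Fin (l - 1) → ℂ) × (Fin (n - l) → ℂ))
    (hΦ : ∀ t, Φ t = ((fun i => t.val ⟨i.val, by have := i.isLt; omega⟩),
                      (fun i => t.val ⟨l + i.val, by have := i.isLt; omega⟩))) :
    (∀ σ t, t idx = 0 → act σ t idx = 0) ∧
    (∀ σ τ, φ (σ * τ) = φ σ * φ τ) ∧
    Function.Bijective Φ ∧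
    (∀ σ t (i : Fin (l - 1)),
      act σ t ⟨i.val, by have := i.isLt; omega⟩
        = ((((φ σ).1 ⟨i.val + 1, by have := i.isLt; omega⟩)⁻¹ : ℂˣ) : ℂ)
            * t ⟨i.val, by have := i.isLt; omega⟩) ∧
    (∀ σ t (i : Fin (n - l)),
      act σ t ⟨l + i.val, by have := i.isLt; omega⟩
        = ((((φ σ).2 ⟨i.val + 1, by have := i.isLt; omega⟩)⁻¹ : ℂˣ) : ℂ)
            * t ⟨l + i.val, by have := i.isLt; omega⟩) := by
  refine ⟨?_, ?_, ⟨?_, ?_⟩, ?_, ?_⟩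
  · intro σ t h
    rw [hact, h, mul_zero]
  · intro σ τ
    ext i
    · rw [Prod.fst_mul, Pi.mul_apply, hφ1, hφ1, hφ1]; rfl
    · rw [Prod.snd_mul, Pi.mul_apply]
      refine Fin.cases ?_ ?_ i
      · rw [hφ2, hφ2, hφ2, ← Finset.prod_mul_distrib]; rfl
      · intro j
        rw [hφ3, hφ3, hφ3]; rfl
  · intro t t' h
    rw [hΦ, hΦ] at h
    obtain ⟨h1, h2⟩ := Prod.mk.injEq .. ▸ h
    apply Subtype.ext
    funext j
    rcases lt_trichotomy j.val (l - 1) with hj | hj | hj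
    · have := congrFun h1 ⟨j.val, hj⟩
      simpa using this
    · have hj' : j = idx := Fin.ext (by omega)
      rw [hj', t.prop, t'.prop]
    · have hjl : l ≤ j.val := by omega
      have := congrFun h2 ⟨j.val - l, by omega⟩
      simp only at this
      have e : (⟨l + (j.val - l), by omega⟩ : Fin n) = j := Fin.ext (by show l + (j.val - l) = j.val; omega)
      rwa [e] at this
  · rintro ⟨a, b⟩
    refine ⟨⟨fun j => if h : j.val < l - 1 then a ⟨j.val, h⟩
      else if h2 : l ≤ j.val then b ⟨j.val - l, by omega⟩ else 0, ?_⟩, ?_⟩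
    · simp only [hidx]
      rw [dif_neg (by omega), dif_neg (by omega)]
    · rw [hΦ]
      refine Prod.ext ?_ ?_ <;> funext i <;> simp only
      · rw [dif_pos i.isLt]
      · rw [dif_neg (by omega), dif_pos (by omega)]
        congr 1
        exact Fin.ext (by simp)
  · intro σ t i
    rw [hact, hφ1]
    congr 2
  · intro σ t i
    rw [hact]
    have e : (⟨i.val + 1, by omega⟩ : Fin (n - l + 1)) = (⟨i.val, i.isLt⟩ : Fin (n - l)).succ :=
      Fin.ext rfl
    rw [e, hφ3]
    have e2 : (⟨l + i.val, by omega⟩ : Fin n).succ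
        = (⟨l + 1 + i.val, by omega⟩ : Fin (n + 1)) :=
      Fin.ext (by show l + i.val + 1 = l + 1 + i.val; omega)
    rw [e2]
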